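/- arXiv:2212.06751 — 2 statements merged into one kernel-verified Lean document; each statement's English description precedes it below -/
import Mathlib

section
/- Let μ be the Lebesgue measure on a measurable space X, and let A, B ⊆ X be measurable sets with μ(A ∪ B) > 0 and finite measure. Define probability density functions p_A(x) = 𝟙[x ∈ A]/μ(A) and p_B(x) = 𝟙[x ∈ B]/μ(B), and the total variation distance d_tv(p_A, p_B) = (1/2)∫_X |p_A(x) − p_B(x)| dμ. Then the Jaccard similarity satisfies μ(A ∩ B)/μ(A ∪ B) = (1 − d_tv(p_A, p_B))/(1 + d_tv(p_A, p_B)). -/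
open MeasureTheory Set

/-- Jaccard similarity of two measurable sets of equal positive finite measure equals
`(1 - d_tv)/(1 + d_tv)` for the total variation distance between their normalized
indicator densities. -/
theorem jaccard_eq_tv_ratio {X : Type*} [MeasurableSpace X] (μ : Measure X)
    (A B : Set X) (hA : MeasurableSet A) (hB : MeasurableSet B)
    (hA0 : 0 < μ A) (hAfin : μ A < ⊤) (hB0 : 0 < μ B) (hBfin : μ B < ⊤)
    (hAB : μ A = μ B) (hU : 0 < μ (A ∪ B))
    (pA pB : X → ℝ)
    (hpA : pA = fun x => A.indicator (fun _ => (1 : ℝ)) x / (μ A).toReal)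
    (hpB : pB = fun x => B.indicator (fun _ => (1 : ℝ)) x / (μ B).toReal)
    (dtv : ℝ) (hdtv : dtv = (1 / 2) * ∫ x, |pA x - pB x| ∂μ) :
    (μ (A ∩ B)).toReal / (μ (A ∪ B)).toReal = (1 - dtv) / (1 + dtv) := by
  set a : ℝ := (μ A).toReal with ha_def
  have ha : 0 < a := ENNReal.toReal_pos hA0.ne' hAfin.ne
  set S : Set X := (A \ B) ∪ (B \ A) with hS_def
  have hSm : MeasurableSet S := (hA.diff hB).union (hB.diff hA)
  -- pointwise identity
  have hfun : (fun x => |pA x - pB x|) = S.indicator (fun _ => 1 / a) := by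
    funext x
    simp only [hpA, hpB, ← hAB, ← ha_def]
    by_cases hxA : x ∈ A <;> by_cases hxB : x ∈ B <;>
      simp [hS_def, indicator, hxA, hxB, abs_of_nonneg, abs_of_nonpos, ha.le,
        one_div, abs_of_nonneg (inv_nonneg.2 ha.le)]
  have hint : ∫ x, |pA x - pB x| ∂μ = (μ S).toReal * (1 / a) := by
    rw [hfun, integral_indicator_const _ hSm, smul_eq_mul, measureReal_def]
  -- measure identities
  have hUfin : μ (A ∪ B) < ⊤ := (measure_union_le A B).trans_lt
    (by rw [← hAB]; exact ENNReal.add_lt_top.2 ⟨hAfin, hAfin⟩)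
  have hIfin : μ (A ∩ B) < ⊤ := ((measure_mono inter_subset_left).trans_lt hAfin)
  have hSfin : μ S < ⊤ := (measure_mono (by intro x hx; rcases hx with h|h; exact Or.inl h.1; exact Or.inr h.1)).trans_lt hUfin
  have h1 : μ (A ∪ B) + μ (A ∩ B) = μ A + μ A := by
    rw [measure_union_add_inter A hB, ← hAB]
  have h2 : μ (A ∩ B) + μ S = μ (A ∪ B) := by
    rw [hS_def]
    rw [← measure_union (Set.disjoint_left.2 (by
      rintro x ⟨hxa, hxb⟩ (⟨_,h⟩|⟨_,h⟩) <;> [exact h hxb; exact h hxa])) hSm]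
    congr 1
    ext x
    constructor
    · rintro (⟨h1,h2⟩|(⟨h1,h2⟩|⟨h1,h2⟩)) <;> [exact Or.inl h1; exact Or.inl h1; exact Or.inr h1]
    · rintro (h|h)
      · by_cases hb : x ∈ B
        · exact Or.inl ⟨h, hb⟩
        · exact Or.inr (Or.inl ⟨h, hb⟩)
      · by_cases hb : x ∈ A
        · exact Or.inl ⟨hb, h⟩
        · exact Or.inr (Or.inr ⟨h, hb⟩)
  set u : ℝ := (μ (A ∪ B)).toReal
  set i : ℝ := (μ (A ∩ B)).toReal
  set s : ℝ := (μ S).toReal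
  have hu : 0 < u := ENNReal.toReal_pos hU.ne' hUfin.ne
  have hi : 0 ≤ i := ENNReal.toReal_nonneg
  have hr1 : u + i = a + a := by
    rw [← ENNReal.toReal_add hUfin.ne hIfin.ne, ← ENNReal.toReal_add hAfin.ne hAfin.ne, h1]
  have hr2 : i + s = u := by
    rw [← ENNReal.toReal_add hIfin.ne hSfin.ne, h2]
  have hdtv' : dtv = s / (2 * a) := by
    rw [hdtv, hint]; field_simp
  rw [hdtv']
  have hs : s = u - i := by linarith
  rw [hs]
  have h2a : 2 * a = u + i := by linarith
  rw [h2a]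
  have hui : 0 < u + i := by linarith
  have hd1 : 1 - (u - i) / (u + i) = 2 * i / (u + i) := by field_simp; ring
  have hd2 : 1 + (u - i) / (u + i) = 2 * u / (u + i) := by field_simp; ring
  rw [hd1, hd2]
  rw [div_div_div_eq]
  field_simp
end

section
/- Let X = X_d × X_{-d} be a product of finite measure spaces with measures μ_d, μ_{-d}, and let A₁, A₂ ⊆ X be measurable sets such that dimension d is trivial for both (every X_d-slice of A_i is null or co-null). Then the Jaccard similarity is preserved under projecting out the trivial dimension: μ(A₁ ∩ A₂)/μ(A₁ ∪ A₂) = μ_{-d}(B₁ ∩ B₂)/μ_{-d}(B₁ ∪ B₂), where B_i = {x_{-d} | the slice of A_i at x_{-d} is co-null}, assuming μ(A₁ ∪ A₂) > 0. -/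
open MeasureTheory Set

lemma full_of_compl_null {α : Type*} [MeasurableSpace α] (μd : Measure α)
    {s : Set α} (h : μd sᶜ = 0) : μd s = μd Set.univ := by
  refine le_antisymm (measure_mono (subset_univ _)) ?_
  calc μd Set.univ = μd (s ∪ sᶜ) := by simp
    _ ≤ μd s + μd sᶜ := measure_union_le _ _
    _ = μd s := by simp [h]

lemma prod_eq_of_slices {α β : Type*} [MeasurableSpace α] [MeasurableSpace β]
    (μd : Measure α) [IsFiniteMeasure μd] (μ' : Measure β) [IsFiniteMeasure μ']
    (A : Set (α × β)) (hA : MeasurableSet A) (B : Set β) (hB : MeasurableSet B)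
    (h1 : ∀ b ∈ B, μd {a | (a, b) ∈ A}ᶜ = 0)
    (h2 : ∀ b ∉ B, μd {a | (a, b) ∈ A} = 0) :
    (μd.prod μ') A = μd Set.univ * μ' B := by
  rw [Measure.prod_apply_symm hA]
  have hcong : ∀ b, μd ((fun a => (a, b)) ⁻¹' A) = B.indicator (fun _ => μd Set.univ) b := by
    intro b
    by_cases hb : b ∈ B
    · rw [Set.indicator_of_mem hb]
      exact full_of_compl_null μd (h1 b hb)
    · rw [Set.indicator_of_notMem hb]
      exact h2 b hb
  rw [lintegral_congr hcong, lintegral_indicator_const hB]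

/-- Trivial dimensions do not affect the Jaccard (γ-set) similarity: projecting out
a trivial dimension preserves the ratio `μ(A₁∩A₂)/μ(A₁∪A₂)`. -/
theorem jaccard_preserved_trivial_dim {α β : Type*} [MeasurableSpace α] [MeasurableSpace β]
    (μd : Measure α) [IsFiniteMeasure μd] (hμd : 0 < μd Set.univ)
    (μ' : Measure β) [IsFiniteMeasure μ']
    (A₁ A₂ : Set (α × β)) (hA₁ : MeasurableSet A₁) (hA₂ : MeasurableSet A₂)
    (htriv₁ : ∀ b : β, μd {a | (a, b) ∈ A₁} = 0 ∨ μd {a | (a, b) ∈ A₁}ᶜ = 0)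
    (htriv₂ : ∀ b : β, μd {a | (a, b) ∈ A₂} = 0 ∨ μd {a | (a, b) ∈ A₂}ᶜ = 0)
    (B₁ B₂ : Set β)
    (hB₁ : B₁ = {b | μd {a | (a, b) ∈ A₁}ᶜ = 0})
    (hB₂ : B₂ = {b | μd {a | (a, b) ∈ A₂}ᶜ = 0})
    (hU : 0 < (μd.prod μ') (A₁ ∪ A₂)) :
    ((μd.prod μ') (A₁ ∩ A₂)).toReal / ((μd.prod μ') (A₁ ∪ A₂)).toReal =
      (μ' (B₁ ∩ B₂)).toReal / (μ' (B₁ ∪ B₂)).toReal := by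
  -- measurability of B₁, B₂
  have hmB₁ : MeasurableSet B₁ := by
    rw [hB₁]
    have hm : Measurable fun b => μd ((fun a => (a, b)) ⁻¹' A₁ᶜ) :=
      measurable_measure_prodMk_right hA₁.compl
    exact hm (measurableSet_singleton 0)
  have hmB₂ : MeasurableSet B₂ := by
    rw [hB₂]
    have hm : Measurable fun b => μd ((fun a => (a, b)) ⁻¹' A₂ᶜ) :=
      measurable_measure_prodMk_right hA₂.compl
    exact hm (measurableSet_singleton 0)
  have hnot₁ : ∀ b ∉ B₁, μd {a | (a, b) ∈ A₁} = 0 := by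
    intro b hb
    rcases htriv₁ b with h | h
    · exact h
    · rw [hB₁] at hb; exact absurd h hb
  have hnot₂ : ∀ b ∉ B₂, μd {a | (a, b) ∈ A₂} = 0 := by
    intro b hb
    rcases htriv₂ b with h | h
    · exact h
    · rw [hB₂] at hb; exact absurd h hb
  have hin₁ : ∀ b ∈ B₁, μd {a | (a, b) ∈ A₁}ᶜ = 0 := by
    intro b hb; rw [hB₁] at hb; exact hb
  have hin₂ : ∀ b ∈ B₂, μd {a | (a, b) ∈ A₂}ᶜ = 0 := by
    intro b hb; rw [hB₂] at hb; exact hb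
  -- intersection
  have hInt : (μd.prod μ') (A₁ ∩ A₂) = μd Set.univ * μ' (B₁ ∩ B₂) := by
    apply prod_eq_of_slices μd μ' _ (hA₁.inter hA₂) _ (hmB₁.inter hmB₂)
    · intro b hb
      rw [show {a | (a, b) ∈ A₁ ∩ A₂} = {a | (a, b) ∈ A₁} ∩ {a | (a, b) ∈ A₂} from rfl,
        Set.compl_inter]
      exact measure_union_null (hin₁ b hb.1) (hin₂ b hb.2)
    · intro b hb
      rcases not_and_or.mp hb with h | h
      · exact measure_mono_null (fun a ha => ha.1) (hnot₁ b h)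
      · exact measure_mono_null (fun a ha => ha.2) (hnot₂ b h)
  -- union
  have hUn : (μd.prod μ') (A₁ ∪ A₂) = μd Set.univ * μ' (B₁ ∪ B₂) := by
    apply prod_eq_of_slices μd μ' _ (hA₁.union hA₂) _ (hmB₁.union hmB₂)
    · intro b hb
      rcases hb with h | h
      · exact measure_mono_null (Set.compl_subset_compl.mpr fun a ha => Or.inl ha) (hin₁ b h)
      · exact measure_mono_null (Set.compl_subset_compl.mpr fun a ha => Or.inr ha) (hin₂ b h)
    · intro b hb
      simp only [Set.mem_union, not_or] at hb
      exact measure_union_null (hnot₁ b hb.1) (hnot₂ b hb.2)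
  -- conclude
  have hc0 : μd Set.univ ≠ 0 := hμd.ne'
  have hcT : μd Set.univ ≠ ⊤ := measure_ne_top μd _
  have hcR : (μd Set.univ).toReal ≠ 0 := ENNReal.toReal_ne_zero.mpr ⟨hc0, hcT⟩
  rw [hInt, hUn, ENNReal.toReal_mul, ENNReal.toReal_mul, mul_div_mul_left _ _ hcR]
end
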